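/- Let P be an orthogonal projection and U a unitary on a finite-dimensional Hilbert space F, and let z₁, z₂ be in the open unit disc with z₂ ≠ 0. If there is a nonzero vector w with (P^⊥ + z₁z₂P)Uw = z₁w and U*(P + z₁z₂P^⊥)w = z₂w, then Pw ≠ 0 and Ψ(z₁)(Pw) = z₂(Pw), where Ψ(z) = P(I - zU*P^⊥)⁻¹U*P|_{Ran P}. -/

import Mathlib

open ContinuousLinearMap

/-!
Write `Q = 1 - P` and `A = 1 - z₁ U*Q`. Since `U*` and `Q` are contractions, `‖z₁ U*Q‖ < 1`
and `A` is invertible by the Neumann series. The second pencil equation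
`U*Pw + z₁z₂ U*Qw = z₂w` rearranges to `U*Pw = z₂ Aw`. As `z₂ ≠ 0` and `A` is injective,
`Pw = 0` would force `w = 0`; and `P A⁻¹ U*P (Pw) = P A⁻¹ (z₂ Aw) = z₂ Pw`.
-/

theorem isUnit_one_sub_smul_of_norm_le_one {𝕜 R : Type*} [NormedField 𝕜] [NormedRing R]
    [NormedAlgebra 𝕜 R] [HasSummableGeomSeries R] {T : R} {z : 𝕜} (hT : ‖T‖ ≤ 1)
    (hz : ‖z‖ < 1) : IsUnit (1 - z • T) :=
  have hzT : ‖z • T‖ < 1 := (norm_smul_le z T).trans_lt <| mul_lt_one_of_nonneg_of_lt_one_left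
    (norm_nonneg z) hz hT
  Units.val_oneSub (z • T) hzT ▸ (Units.oneSub (z • T) hzT).isUnit

namespace ContinuousLinearMap

section Module

variable {R M : Type*} [CommRing R] [TopologicalSpace M] [AddCommGroup M] [Module R M]
  [IsTopologicalAddGroup M]

theorem ringInverse_apply_apply {A : M →L[R] M} (hA : IsUnit A) (x : M) :
    Ring.inverse A (A x) = x := by
  rw [← mul_apply_eq_comp, Ring.inverse_mul_cancel A hA, one_apply_eq_self]

theorem comp_add_smul_one_sub_apply_eq_smul_iff [ContinuousConstSMul R M] (V P : M →L[R] M)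
    (a b : R) (w : M) :
    (V ∘L (P + (a * b) • (1 - P))) w = b • w ↔
      V (P w) = b • ((1 - a • (V ∘L (1 - P)) : M →L[R] M) w) := by
  simp only [comp_apply, add_apply, smul_apply, sub_apply, one_apply_eq_self, map_add, map_sub,
    map_smul, smul_sub, smul_smul]
  rw [mul_comm b a, ← eq_sub_iff_add_eq]

end Module

variable {𝕜 E : Type*} [RCLike 𝕜] [NormedAddCommGroup E] [InnerProductSpace 𝕜 E]
  [CompleteSpace E]

theorem norm_adjoint_le_one_of_comp_adjoint_eq_one {U : E →L[𝕜] E}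
    (hU : U ∘L adjoint U = 1) : ‖adjoint U‖ ≤ 1 := by
  have h : ‖adjoint U‖ * ‖adjoint U‖ ≤ 1 := by
    rw [← norm_adjoint_comp_self, adjoint_adjoint, hU]
    exact norm_id_le
  nlinarith [norm_nonneg (adjoint U)]

end ContinuousLinearMap

theorem pencil_to_inner {n : ℕ}
    (P U : EuclideanSpace ℂ (Fin n) →L[ℂ] EuclideanSpace ℂ (Fin n))
    (hP : IsSelfAdjoint P) (hP2 : P ∘L P = P)
    (hU2 : U ∘L adjoint U = 1)
    (z₁ z₂ : ℂ) (hz₁ : ‖z₁‖ < 1) (hz₂0 : z₂ ≠ 0)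
    (w : EuclideanSpace ℂ (Fin n)) (hw : w ≠ 0)
    (h2 : (adjoint U ∘L (P + (z₁ * z₂) • (1 - P))) w = z₂ • w) :
    P w ≠ 0 ∧
    (P ∘L Ring.inverse ((1 : EuclideanSpace ℂ (Fin n) →L[ℂ] EuclideanSpace ℂ (Fin n))
        - z₁ • (adjoint U ∘L (1 - P))) ∘L (adjoint U ∘L P)) (P w) = z₂ • (P w) := by
  set A := (1 : EuclideanSpace ℂ (Fin n) →L[ℂ] EuclideanSpace ℂ (Fin n))
    - z₁ • (adjoint U ∘L (1 - P))
  have hQnorm : ‖(1 : EuclideanSpace ℂ (Fin n) →L[ℂ] _) - P‖ ≤ 1 :=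
    (IsStarProjection.one_sub ⟨hP2, hP⟩).norm_le
  have hA : IsUnit A := isUnit_one_sub_smul_of_norm_le_one ((opNorm_comp_le _ _).trans <|
    mul_le_one₀ (norm_adjoint_le_one_of_comp_adjoint_eq_one hU2) (norm_nonneg _) hQnorm) hz₁
  have hUPw : adjoint U (P w) = z₂ • A w :=
    (comp_add_smul_one_sub_apply_eq_smul_iff _ _ _ _ _).1 h2
  have hPw : P w ≠ 0 := fun h0 ↦ by
    rw [h0, map_zero, eq_comm, smul_eq_zero] at hUPw
    refine hw ?_
    rw [← ringInverse_apply_apply hA w, hUPw.resolve_left hz₂0, map_zero]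
  refine ⟨hPw, ?_⟩
  have hPPw : P (P w) = P w := congr($hP2 w)
  calc (P ∘L Ring.inverse A ∘L (adjoint U ∘L P)) (P w)
      = P (Ring.inverse A (adjoint U (P (P w)))) := rfl
    _ = z₂ • P w := by rw [hPPw, hUPw, map_smul, ringInverse_apply_apply hA, map_smul]
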